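/- For all integers n, i, k with 1 ≤ i ≤ n-1 and k ≥ 0: Σ_{j=k}^{⌊n/2⌋} C(j,k)·[C(n-i,j)·C(i-1,i-j) - C(n-i-1,j)·C(i,i+1-j)] = C(n-i,k)·C(n-k-1,i-k) - C(n-i-1,k)·C(n-k-1,i+1-k). -/

import Mathlib

/-! Trinomial revision `C(j,k) C(a,j) = C(a,k) C(a-k,j-k)` pulls `C(a,k)` out of each of the two
sums, and what remains is a Vandermonde convolution, equal to `C(a+b-k, c-k)`. Cutting the sums
off at `⌊n/2⌋` loses nothing, since every summand with `2j > n` vanishes. -/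

/-- The binomial coefficient `C(a,b)` for integer arguments, with the convention that
`C(a,b) = 0` unless `0 ≤ b ≤ a`. -/
def Cb (a b : ℤ) : ℚ :=
  if 0 ≤ b ∧ b ≤ a then (a.toNat.choose b.toNat : ℚ) else 0

open Finset

lemma Cb_of_neg {a b : ℤ} (h : b < 0) : Cb a b = 0 :=
  if_neg (by omega)

lemma Cb_of_lt {a b : ℤ} (h : a < b) : Cb a b = 0 :=
  if_neg (by omega)

lemma Cb_natCast (a b : ℕ) : Cb a b = a.choose b := by
  rcases le_or_gt b a with h | h
  · rw [Cb, if_pos ⟨by positivity, by exact_mod_cast h⟩]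
    simp
  · rw [Cb_of_lt (by exact_mod_cast h), Nat.choose_eq_zero_of_lt h, Nat.cast_zero]

lemma Cb_mul_Cb_sub_eq_zero {a c j : ℤ} (b : ℤ) (h : a + c < 2 * j) :
    Cb a j * Cb b (c - j) = 0 := by
  rcases lt_or_ge a j with h' | h'
  · rw [Cb_of_lt h', zero_mul]
  · rw [Cb_of_neg (show c - j < 0 by omega), mul_zero]

lemma sum_range_choose_mul_Cb (A B : ℕ) (C : ℤ) {M : ℕ} (hM : A < M) :
    ∑ p ∈ range M, (A.choose p : ℚ) * Cb B (C - p) = Cb (A + B) C := by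
  rcases lt_or_ge C 0 with hC | hC
  · rw [Cb_of_neg hC]
    exact sum_eq_zero fun p _ => by rw [Cb_of_neg (by omega), mul_zero]
  lift C to ℕ using hC
  have widen_M : ∑ p ∈ range M, (A.choose p : ℚ) * Cb B (C - p)
      = ∑ p ∈ range (max M (C + 1)), (A.choose p : ℚ) * Cb B (C - p) :=
    sum_subset (range_subset_range.mpr (le_max_left _ _)) fun p _ hp => by
      rw [Nat.choose_eq_zero_of_lt (by simp only [mem_range] at hp; omega), Nat.cast_zero,
        zero_mul]
  have widen_C : ∑ p ∈ range (C + 1), (A.choose p : ℚ) * Cb B (C - p)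
      = ∑ p ∈ range (max M (C + 1)), (A.choose p : ℚ) * Cb B (C - p) :=
    sum_subset (range_subset_range.mpr (le_max_right _ _)) fun p _ hp => by
      rw [Cb_of_neg (by simp only [mem_range] at hp; omega), mul_zero]
  rw [widen_M, ← widen_C, ← Nat.cast_add, Cb_natCast, Nat.add_choose_eq,
    Nat.sum_antidiagonal_eq_sum_range_succ_mk, Nat.cast_sum]
  refine sum_congr rfl fun p hp => ?_
  rw [← Nat.cast_sub (by simp only [mem_range] at hp; omega), Cb_natCast, Nat.cast_mul]

lemma sum_Icc_Cb_mul_Cb_mul_Cb {a k N : ℤ} (b c : ℤ) (hk : 0 ≤ k) (hb : 0 ≤ b)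
    (hN : a ≤ N) :
    ∑ j ∈ Icc k N, Cb j k * (Cb a j * Cb b (c - j)) = Cb a k * Cb (a + b - k) (c - k) := by
  rcases lt_or_ge a k with hka | hka
  · rw [Cb_of_lt hka, zero_mul]
    exact sum_eq_zero fun j hj => by
      rw [Cb_of_lt (show a < j by simp only [mem_Icc] at hj; omega), zero_mul, mul_zero]
  lift k to ℕ using hk
  lift b to ℕ using hb
  obtain ⟨A, hA⟩ := Int.eq_ofNat_of_zero_le (sub_nonneg.mpr hka)
  obtain rfl : a = ((k + A : ℕ) : ℤ) := by push_cast; omega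
  have trinomial (p : ℕ) :
      ((k + p).choose k * (k + A).choose (k + p) : ℚ) = (k + A).choose k * A.choose p := by
    rw [mul_comm]
    exact_mod_cast by simpa using Nat.choose_mul (n := k + A) (Nat.le_add_right k p)
  rw [Int.Icc_eq_finset_map, sum_map]
  simp only [Function.Embedding.trans_apply, Nat.castEmbedding_apply, addLeftEmbedding_apply]
  have term (p : ℕ) : Cb (k + p) k * (Cb (k + A : ℕ) (k + p) * Cb b (c - (k + p)))
      = (k + A).choose k * ((A.choose p : ℚ) * Cb b (c - k - p)) := by
    rw [← Nat.cast_add, Cb_natCast, Cb_natCast, ← mul_assoc, trinomial, mul_assoc, Nat.cast_add,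
      sub_sub]
  rw [sum_congr rfl fun p _ => term p, ← mul_sum, sum_range_choose_mul_Cb A b _ (by omega),
    Cb_natCast, show ((k + A : ℕ) : ℤ) + b - k = A + b by push_cast; ring]

/-- For `1 ≤ i ≤ n-1` and `k ≥ 0`:
`Σ_{j=k}^{⌊n/2⌋} C(j,k)[C(n-i,j)C(i-1,i-j) - C(n-i-1,j)C(i,i+1-j)]
  = C(n-i,k)C(n-k-1,i-k) - C(n-i-1,k)C(n-k-1,i+1-k)`. -/
theorem stmt11 (n i k : ℤ) (hi1 : 1 ≤ i) (hi2 : i ≤ n - 1) (hk : 0 ≤ k) :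
    ∑ j ∈ Finset.Icc k (n / 2),
        Cb j k * (Cb (n - i) j * Cb (i - 1) (i - j) - Cb (n - i - 1) j * Cb i (i + 1 - j))
      = Cb (n - i) k * Cb (n - k - 1) (i - k)
        - Cb (n - i - 1) k * Cb (n - k - 1) (i + 1 - k) := by
  have beyond_half (j : ℤ) (hj : j ∈ Icc k n) (hj' : j ∉ Icc k (n / 2)) :
      Cb j k * (Cb (n - i) j * Cb (i - 1) (i - j) - Cb (n - i - 1) j * Cb i (i + 1 - j)) = 0 := by
    have h2j : n < 2 * j := by simp only [mem_Icc] at hj hj'; omega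
    rw [Cb_mul_Cb_sub_eq_zero (i - 1) (by omega), Cb_mul_Cb_sub_eq_zero i (by omega), sub_zero,
      mul_zero]
  rw [sum_subset (Icc_subset_Icc_right (by omega)) beyond_half]
  simp only [mul_sub, sum_sub_distrib]
  rw [sum_Icc_Cb_mul_Cb_mul_Cb (i - 1) i hk (by omega) (by omega),
    sum_Icc_Cb_mul_Cb_mul_Cb i (i + 1) hk (by omega) (by omega),
    show n - i + (i - 1) - k = n - k - 1 by ring, show n - i - 1 + i - k = n - k - 1 by ring]
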